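/- arXiv:2011.09593 — 5 statements merged into one kernel-verified Lean document; each statement's English description precedes it below -/
import Mathlib

section
/- Fix natural numbers n and m ≥ 1. The number of lattice paths from (0,0) to (n,n) using unit North and East steps such that every prefix has at least as many North steps as East steps (the path stays weakly above the diagonal) and the excess of North over East steps in every prefix is at most m (the path stays weakly below the line y = x + m) equals the alternating sum Σ_{k∈ℤ} [ C(2n, n + k(m+2)) − C(2n, n + 1 + k(m+2)) ]. -/
/-- Binomial coefficient `C(r, j)` with an integer lower index, equal to `0`
when `j < 0` or `j > r`. -/
def zchoose (r : ℕ) (j : ℤ) : ℤ := if 0 ≤ j then (r.choose j.toNat : ℤ) else 0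

namespace BddDyck

open Function

lemma zchoose_ne_zero {r : ℕ} {j : ℤ} (h : zchoose r j ≠ 0) : 0 ≤ j ∧ j ≤ r := by
  unfold zchoose at h
  split at h
  · refine ⟨by assumption, ?_⟩
    by_contra hc
    push_neg at hc
    have : r < j.toNat := by omega
    simp [Nat.choose_eq_zero_of_lt this] at h
  · simp at h

lemma zchoose_neg {r : ℕ} {j : ℤ} (h : j < 0) : zchoose r j = 0 := by
  simp [zchoose, not_le.2 h]

lemma zchoose_big {r : ℕ} {j : ℤ} (h : (r : ℤ) < j) : zchoose r j = 0 := by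
  by_contra hc
  have := zchoose_ne_zero hc
  omega

lemma zchoose_pascal (r : ℕ) (j : ℤ) :
    zchoose (r + 1) j = zchoose r j + zchoose r (j - 1) := by
  rcases lt_trichotomy j 0 with h | h | h
  · rw [zchoose_neg h, zchoose_neg h, zchoose_neg (by omega)]; ring
  · subst h
    rw [zchoose_neg (by norm_num : (0:ℤ) - 1 < 0)]
    simp [zchoose]
  · obtain ⟨a, rfl⟩ : ∃ a : ℕ, j = (a : ℤ) + 1 := ⟨(j - 1).toNat, by omega⟩
    have h1 : ((a : ℤ) + 1).toNat = a + 1 := by omega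
    have h2 : ((a : ℤ) + 1 - 1).toNat = a := by omega
    simp only [zchoose, h1, h2, if_pos (by omega : (0:ℤ) ≤ (a:ℤ)+1),
      if_pos (by omega : (0:ℤ) ≤ (a:ℤ)+1-1)]
    rw [Nat.choose_succ_succ']
    push_cast; ring

lemma zchoose_symm (r : ℕ) (j : ℤ) : zchoose r j = zchoose r (r - j) := by
  rcases lt_trichotomy j 0 with h | h | h
  · rw [zchoose_neg h, zchoose_big (by omega : (r:ℤ) < r - j)]
  · subst h
    simp [zchoose, show ((r:ℤ) - 0).toNat = r by omega, Nat.choose_self]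
  · rcases le_or_gt j r with h' | h'
    · have h1 : (0:ℤ) ≤ r - j := by omega
      rw [zchoose, zchoose, if_pos h.le, if_pos h1]
      have h2 : ((r:ℤ) - j).toNat = r - j.toNat := by omega
      have h3 : j.toNat ≤ r := by omega
      rw [h2, Nat.choose_symm h3]
    · rw [zchoose_big h', zchoose_neg (by omega)]

lemma support_finite (r : ℕ) (a N : ℤ) (hN : 1 ≤ N) :
    (support fun k : ℤ => zchoose r (a + k * N)).Finite := by
  apply Set.Finite.subset (Set.finite_Icc (-(|a| + r) : ℤ) (|a| + r))
  intro k hk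
  have h := zchoose_ne_zero hk
  have hb1 : -|a| ≤ a := neg_abs_le a
  have hb2 : a ≤ |a| := le_abs_self a
  have h1 : |k * N| ≤ |a| + r := by
    rw [abs_le]; constructor <;> nlinarith [h.1, h.2]
  have h2 : |k| ≤ |k * N| := by
    rw [abs_mul]
    nlinarith [abs_nonneg k, abs_nonneg N, le_abs_self N]
  rw [Set.mem_Icc, ← abs_le]
  omega

lemma sub_support_finite (r : ℕ) (a b N : ℤ) (hN : 1 ≤ N) :
    (support fun k : ℤ => zchoose r (a + k * N) - zchoose r (b + k * N)).Finite := by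
  apply Set.Finite.subset ((support_finite r a N hN).union (support_finite r b N hN))
  intro k hk
  by_contra hc
  simp only [Set.mem_union, mem_support, not_or, not_not] at hc
  simp [mem_support, hc.1, hc.2] at hk

lemma not_mul (N x : ℤ) (hN : 0 < N) (h1 : 0 < x) (h2 : x < N) (k : ℤ) : x ≠ k * N := by
  rintro rfl
  rcases le_or_gt k 0 with hk | hk
  · nlinarith
  · nlinarith

/-- The path predicate. -/
def bdd (m : ℕ) (l : List Bool) : Prop :=
  ∀ p : List Bool, p <+: l → p.count false ≤ p.count true ∧ p.count true ≤ p.count false + m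

/-- Bounded paths of length `ℓ` with `u` north steps. -/
def pset (m ℓ : ℕ) (u : ℤ) : Set (List Bool) :=
  {l | l.length = ℓ ∧ (l.count true : ℤ) = u ∧ bdd m l}

/-- The reflection alternating sum. -/
noncomputable def R (m ℓ : ℕ) (u : ℤ) : ℤ :=
  ∑ᶠ k : ℤ, (zchoose ℓ (u + k * ((m : ℤ) + 2)) -
    zchoose ℓ ((ℓ : ℤ) - 1 - u + k * ((m : ℤ) + 2)))

lemma pset_finite (m ℓ : ℕ) (u : ℤ) : (pset m ℓ u).Finite := by
  apply Set.Finite.subset (List.finite_length_eq Bool ℓ)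
  intro l hl
  exact hl.1

lemma count_false_int (l : List Bool) :
    (l.count false : ℤ) = l.length - l.count true := by
  have := List.count_false_add_count_true l
  omega

lemma pset_empty {m ℓ : ℕ} {u : ℤ} (h : 2 * u - ℓ < 0 ∨ (m : ℤ) < 2 * u - ℓ) :
    pset m ℓ u = ∅ := by
  ext l
  simp only [pset, Set.mem_setOf_eq, Set.mem_empty_iff_false, iff_false, not_and]
  rintro h1 h2 h3
  obtain ⟨c1, c2⟩ := h3 l l.prefix_refl
  have hf := count_false_int l
  have c1' : (l.count false : ℤ) ≤ l.count true := by exact_mod_cast c1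
  have c2' : (l.count true : ℤ) ≤ l.count false + m := by exact_mod_cast c2
  rw [h1] at hf
  omega

lemma prefix_concat_iff {p l : List Bool} {b : Bool} :
    p <+: l ++ [b] ↔ p <+: l ∨ p = l ++ [b] := by
  constructor
  · rintro ⟨t, ht⟩
    rcases t.eq_nil_or_concat with rfl | ⟨t', c, rfl⟩
    · right; simpa using ht
    · left
      rw [List.concat_eq_append, ← List.append_assoc] at ht
      have hc : c = b := by
        have := congrArg List.getLast? ht
        simp only [List.getLast?_concat] at this
        exact Option.some_injective _ this
      subst hc
      exact ⟨t', List.append_cancel_right ht⟩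
  · rintro (h | rfl)
    · exact h.trans (l.prefix_append [b])
    · exact List.prefix_refl _

lemma pset_concat {m ℓ : ℕ} {u : ℤ} (hm : 1 ≤ m)
    (h0 : 0 ≤ 2 * u - ((ℓ : ℤ) + 1)) (h1 : 2 * u - ((ℓ : ℤ) + 1) ≤ m) :
    pset m (ℓ + 1) u =
      (fun l => l ++ [true]) '' pset m ℓ (u - 1) ∪
      (fun l => l ++ [false]) '' pset m ℓ u := by
  ext l
  constructor
  · rintro ⟨hl, hu, hb⟩
    rcases l.eq_nil_or_concat with rfl | ⟨l', b, hlb⟩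
    · simp at hl
    · rw [List.concat_eq_append] at hlb
      subst hlb
      have hlen : l'.length = ℓ := by simpa using hl
      have hbdd : bdd m l' := fun p hp => hb p (hp.trans (l'.prefix_append [b]))
      cases b
      · right
        refine ⟨l', ⟨hlen, ?_, hbdd⟩, rfl⟩
        rw [← hu]
        simp
      · left
        refine ⟨l', ⟨hlen, ?_, hbdd⟩, rfl⟩
        have hc : (l' ++ [true]).count true = l'.count true + 1 := by simp
        rw [hc] at hu; push_cast at hu; omega
  · intro hl
    have key : ∀ (b : Bool) (l' : List Bool), l' ∈ pset m ℓ (u - if b then 1 else 0) →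
        l' ++ [b] ∈ pset m (ℓ + 1) u := by
      rintro b l' ⟨hlen, hcnt, hbdd⟩
      have hulen : (l' ++ [b]).length = ℓ + 1 := by simp [hlen]
      have hucnt : ((l' ++ [b]).count true : ℤ) = u := by
        cases b
        · have hc : (l' ++ [false]).count true = l'.count true := by simp
          rw [hc]; simpa using hcnt
        · have hc : (l' ++ [true]).count true = l'.count true + 1 := by simp
          rw [hc]; simp only [if_true] at hcnt; push_cast; omega
      refine ⟨hulen, hucnt, ?_⟩
      intro p hp
      rcases prefix_concat_iff.1 hp with hp' | rfl
      · exact hbdd p hp'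
      · have hf := count_false_int (l' ++ [b])
        rw [hucnt, hulen] at hf
        push_cast at hf
        constructor
        · exact_mod_cast (by omega : ((l' ++ [b]).count false : ℤ) ≤ (l' ++ [b]).count true)
        · exact_mod_cast (by omega :
            ((l' ++ [b]).count true : ℤ) ≤ (l' ++ [b]).count false + m)
    rcases hl with ⟨l', hl', rfl⟩ | ⟨l', hl', rfl⟩
    · exact key true l' (by simpa using hl')
    · exact key false l' (by simpa using hl')

lemma pset_card_rec {m ℓ : ℕ} {u : ℤ} (hm : 1 ≤ m)
    (h0 : 0 ≤ 2 * u - ((ℓ : ℤ) + 1)) (h1 : 2 * u - ((ℓ : ℤ) + 1) ≤ m) :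
    ((pset m (ℓ + 1) u).ncard : ℤ) =
      (pset m ℓ (u - 1)).ncard + (pset m ℓ u).ncard := by
  rw [pset_concat hm h0 h1]
  have hinj : ∀ b : Bool, Function.Injective (fun l : List Bool => l ++ [b]) :=
    fun b l1 l2 h => List.append_cancel_right h
  have hdisj : Disjoint ((fun l => l ++ [true]) '' pset m ℓ (u - 1))
      ((fun l => l ++ [false]) '' pset m ℓ u) := by
    rw [Set.disjoint_left]
    rintro x ⟨a, _, rfl⟩ ⟨c, _, hc⟩
    have := congrArg List.getLast? hc
    simp [List.getLast?_concat] at this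
  rw [Set.ncard_union_eq hdisj ((pset_finite m ℓ (u-1)).image _)
      ((pset_finite m ℓ u).image _),
    Set.ncard_image_of_injective _ (hinj true), Set.ncard_image_of_injective _ (hinj false)]
  push_cast; ring

lemma R_rec (m ℓ : ℕ) (hm : 1 ≤ m) (u : ℤ) :
    R m (ℓ + 1) u = R m ℓ u + R m ℓ (u - 1) := by
  have hN : (1 : ℤ) ≤ (m : ℤ) + 2 := by omega
  have step : ∀ k : ℤ,
      zchoose (ℓ + 1) (u + k * ((m : ℤ) + 2)) -
        zchoose (ℓ + 1) ((↑(ℓ + 1) : ℤ) - 1 - u + k * ((m : ℤ) + 2)) =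
      (zchoose ℓ (u + k * ((m : ℤ) + 2)) -
        zchoose ℓ ((ℓ : ℤ) - 1 - u + k * ((m : ℤ) + 2))) +
      (zchoose ℓ (u - 1 + k * ((m : ℤ) + 2)) -
        zchoose ℓ ((ℓ : ℤ) - 1 - (u - 1) + k * ((m : ℤ) + 2))) := by
    intro k
    rw [zchoose_pascal, zchoose_pascal,
      show u + k * ((m : ℤ) + 2) - 1 = u - 1 + k * ((m : ℤ) + 2) from by ring,
      show (↑(ℓ + 1) : ℤ) - 1 - u + k * ((m : ℤ) + 2) - 1 =
        (ℓ : ℤ) - 1 - u + k * ((m : ℤ) + 2) from by push_cast; ring,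
      show (↑(ℓ + 1) : ℤ) - 1 - u + k * ((m : ℤ) + 2) =
        (ℓ : ℤ) - 1 - (u - 1) + k * ((m : ℤ) + 2) from by push_cast; ring]
    ring
  unfold R
  rw [finsum_congr step,
    finsum_add_distrib (sub_support_finite ℓ u _ _ hN) (sub_support_finite ℓ (u - 1) _ _ hN)]

lemma R_low {m ℓ : ℕ} {u : ℤ} (h : 2 * u = (ℓ : ℤ) - 1) : R m ℓ u = 0 := by
  apply finsum_eq_zero_of_forall_eq_zero
  intro k
  have : (ℓ : ℤ) - 1 - u = u := by omega
  rw [this, sub_self]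

lemma R_high {m ℓ : ℕ} (hm : 1 ≤ m) {u : ℤ} (h : 2 * u = (ℓ : ℤ) + m + 1) :
    R m ℓ u = 0 := by
  have hN : (1 : ℤ) ≤ (m : ℤ) + 2 := by omega
  have key : ∀ k : ℤ, (ℓ : ℤ) - 1 - u + k * ((m : ℤ) + 2) =
      u + (k - 1) * ((m : ℤ) + 2) := by
    intro k
    have h2 : (k - 1) * ((m : ℤ) + 2) = k * ((m : ℤ) + 2) - ((m : ℤ) + 2) := by ring
    rw [h2]; omega
  unfold R
  rw [finsum_congr (fun k => by rw [key k])]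
  rw [finsum_sub_distrib (support_finite ℓ u _ hN) ?_]
  · rw [sub_eq_zero]
    have he := finsum_comp_equiv (Equiv.subRight (1 : ℤ))
      (f := fun k : ℤ => zchoose ℓ (u + k * ((m : ℤ) + 2)))
    simp only [Equiv.subRight_apply] at he
    exact he.symm
  · have hfin := support_finite ℓ (u - ((m : ℤ) + 2)) ((m : ℤ) + 2) hN
    apply Set.Finite.subset hfin
    intro k hk
    simp only [mem_support] at hk ⊢
    convert hk using 2
    ring

lemma R_base_pos {m : ℕ} (hm : 1 ≤ m) {u : ℤ} (hu : 0 < u) (hu2 : 2 * u ≤ (m : ℤ) + 1) :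
    R m 0 u = 0 := by
  have hN : (0 : ℤ) < (m : ℤ) + 2 := by omega
  apply finsum_eq_zero_of_forall_eq_zero
  intro k
  have e1 : zchoose 0 (u + k * ((m : ℤ) + 2)) = 0 := by
    by_contra hc
    obtain ⟨a, b⟩ := zchoose_ne_zero hc
    push_cast at b
    have hkn : u = -(k * ((m : ℤ) + 2)) := by omega
    rw [show -(k * ((m : ℤ) + 2)) = (-k) * ((m : ℤ) + 2) from by ring] at hkn
    exact not_mul _ u hN hu (by omega) (-k) hkn
  have e2 : zchoose 0 ((0 : ℤ) - 1 - u + k * ((m : ℤ) + 2)) = 0 := by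
    by_contra hc
    obtain ⟨a, b⟩ := zchoose_ne_zero hc
    push_cast at b
    have hkn : u + 1 = k * ((m : ℤ) + 2) := by omega
    exact not_mul _ (u + 1) hN (by omega) (by omega) k hkn
  rw [show ((0 : ℕ) : ℤ) - 1 - u + k * ((m : ℤ) + 2) =
    (0 : ℤ) - 1 - u + k * ((m : ℤ) + 2) from by push_cast; ring, e1, e2, sub_zero]

lemma R_base_zero {m : ℕ} (hm : 1 ≤ m) : R m 0 0 = 1 := by
  have hN : (0 : ℤ) < (m : ℤ) + 2 := by omega
  unfold R
  rw [finsum_eq_single _ 0 ?_]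
  · norm_num
    rw [zchoose_neg (by norm_num : (-1 : ℤ) < 0)]
    simp [zchoose]
  · intro k hk
    have e1 : zchoose 0 ((0 : ℤ) + k * ((m : ℤ) + 2)) = 0 := by
      by_contra hc
      obtain ⟨a, b⟩ := zchoose_ne_zero hc
      push_cast at b
      have : k * ((m : ℤ) + 2) = 0 := by omega
      rcases mul_eq_zero.mp this with h | h
      · exact hk h
      · omega
    have e2 : zchoose 0 ((0 : ℤ) - 1 - 0 + k * ((m : ℤ) + 2)) = 0 := by
      by_contra hc
      obtain ⟨a, b⟩ := zchoose_ne_zero hc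
      push_cast at b
      have hkn : (1 : ℤ) = k * ((m : ℤ) + 2) := by omega
      exact not_mul _ 1 hN one_pos (by omega) k hkn
    rw [show ((0 : ℕ) : ℤ) - 1 - (0 : ℤ) + k * ((m : ℤ) + 2) =
        (0 : ℤ) - 1 - 0 + k * ((m : ℤ) + 2) from by push_cast; ring,
      show ((0 : ℤ) : ℤ) + k * ((m : ℤ) + 2) = (0 : ℤ) + k * ((m : ℤ) + 2) from rfl]
    rw [e1, e2, sub_zero]

lemma main (m : ℕ) (hm : 1 ≤ m) : ∀ ℓ : ℕ, ∀ u : ℤ,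
    -1 ≤ 2 * u - ℓ → 2 * u - ℓ ≤ (m : ℤ) + 1 →
    ((pset m ℓ u).ncard : ℤ) = R m ℓ u := by
  intro ℓ
  induction ℓ with
  | zero =>
    intro u h1 h2
    push_cast at h1 h2
    rcases eq_or_lt_of_le (show (0 : ℤ) ≤ u by omega) with hu | hu
    · obtain rfl := hu.symm
      have hps : pset m 0 0 = {([] : List Bool)} := by
        ext l
        constructor
        · rintro ⟨hl, -, -⟩
          simpa using List.length_eq_zero_iff.mp hl
        · intro hl
          rw [Set.mem_singleton_iff] at hl
          subst hl
          refine ⟨rfl, by simp, ?_⟩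
          intro p hp
          rw [List.prefix_nil.mp hp]
          simp
      rw [hps, Set.ncard_singleton, R_base_zero hm]
      norm_num
    · have hps : pset m 0 u = ∅ := by
        ext l
        simp only [pset, Set.mem_setOf_eq, Set.mem_empty_iff_false, iff_false, not_and]
        intro hl
        rw [List.length_eq_zero_iff] at hl
        subst hl
        intro hc
        simp at hc
        omega
      rw [hps, Set.ncard_empty, R_base_pos hm hu (by omega)]
      norm_num
  | succ ℓ ih =>
    intro u h1 h2
    push_cast at h1 h2
    rcases eq_or_lt_of_le h1 with hlow | h1'
    · rw [pset_empty (Or.inl (by push_cast; omega)), R_low (by push_cast; omega)]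
      simp
    · rcases eq_or_lt_of_le h2 with hhigh | h2'
      · rw [pset_empty (Or.inr (by push_cast; omega)), R_high hm (by push_cast; omega)]
        simp
      · rw [pset_card_rec hm (by omega) (by omega), R_rec m ℓ hm u,
          ih u (by push_cast; omega) (by push_cast; omega),
          ih (u - 1) (by push_cast; omega) (by push_cast; omega)]
        ring

end BddDyck

open BddDyck in
/-- The number of lattice paths from (0,0) to (n,n) (encoded as lists of booleans,
`true` = North, `false` = East) staying weakly between the diagonal and the line
`y = x + m` equals the alternating sum
`∑_{k∈ℤ} [C(2n, n + k(m+2)) − C(2n, n + 1 + k(m+2))]`. -/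
theorem card_bounded_dyck_paths (n m : ℕ) (hm : 1 ≤ m) :
    (Nat.card {l : List Bool //
        l.length = 2 * n ∧ l.count true = n ∧
        ∀ p : List Bool, p <+: l →
          p.count false ≤ p.count true ∧ p.count true ≤ p.count false + m} : ℤ) =
      ∑ᶠ k : ℤ, (zchoose (2 * n) (n + k * (m + 2)) -
        zchoose (2 * n) (n + 1 + k * (m + 2))) := by
  have hN : (1 : ℤ) ≤ (m : ℤ) + 2 := by omega
  have hL : (Nat.card {l : List Bool //
      l.length = 2 * n ∧ l.count true = n ∧
      ∀ p : List Bool, p <+: l →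
        p.count false ≤ p.count true ∧ p.count true ≤ p.count false + m} : ℤ) =
      ((pset m (2 * n) (n : ℤ)).ncard : ℤ) := by
    congr 1
    rw [← Nat.card_coe_set_eq]
    apply Nat.card_congr
    apply Equiv.subtypeEquivRight
    intro l
    constructor
    · rintro ⟨a, b, c⟩
      exact ⟨a, by exact_mod_cast b, c⟩
    · rintro ⟨a, b, c⟩
      exact ⟨a, by exact_mod_cast b, c⟩
  rw [hL, main m hm (2 * n) n (by push_cast; omega) (by push_cast; omega)]
  unfold R
  have he := finsum_comp_equiv (Equiv.neg ℤ)
    (f := fun k : ℤ => zchoose (2 * n) ((n : ℤ) + k * ((m : ℤ) + 2)) -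
      zchoose (2 * n) ((n : ℤ) + 1 + k * ((m : ℤ) + 2)))
  simp only [Equiv.neg_apply] at he
  rw [← he]
  apply finsum_congr
  intro k
  have e1 : zchoose (2 * n) ((n : ℤ) + (-k) * ((m : ℤ) + 2)) =
      zchoose (2 * n) ((n : ℤ) + k * ((m : ℤ) + 2)) := by
    rw [zchoose_symm]
    congr 1
    push_cast; ring
  have e2 : zchoose (2 * n) ((n : ℤ) + 1 + (-k) * ((m : ℤ) + 2)) =
      zchoose (2 * n) ((↑(2 * n) : ℤ) - 1 - n + k * ((m : ℤ) + 2)) := by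
    rw [zchoose_symm]
    congr 1
    push_cast; ring
  rw [e1, e2]
end

section
/- Fix natural numbers n, m, s with m + s ≥ 1, and set N = m + s + 2. The number of lattice paths from (0,0) to (n,n) using unit North and East steps such that in every prefix the number of North steps minus the number of East steps lies between −s and m (inclusive) equals the alternating sum Σ_{k∈ℤ} [ C(2n, n + kN) − C(2n, n + s + 1 + kN) ]. -/
section zchoose

lemma zchoose_natCast (r k : ℕ) : zchoose r k = r.choose k := by
  simp [zchoose]

lemma zchoose_of_neg {r : ℕ} {j : ℤ} (h : j < 0) : zchoose r j = 0 :=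
  if_neg h.not_ge

lemma zchoose_of_lt {r : ℕ} {j : ℤ} (h : (r : ℤ) < j) : zchoose r j = 0 := by
  lift j to ℕ using by omega
  rw [zchoose_natCast, Nat.choose_eq_zero_of_lt (by omega), Nat.cast_zero]

lemma support_zchoose_subset (r : ℕ) : Function.support (zchoose r) ⊆ Set.Icc 0 (r : ℤ) := by
  intro j hj
  by_contra hj'
  rcases not_and_or.mp hj' with h | h
  · exact hj (zchoose_of_neg (not_le.mp h))
  · exact hj (zchoose_of_lt (not_le.mp h))

lemma zchoose_sub_left (r : ℕ) (j : ℤ) : zchoose r (r - j) = zchoose r j := by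
  rcases lt_or_ge j 0 with h | h
  · rw [zchoose_of_neg h, zchoose_of_lt (by omega)]
  rcases lt_or_ge (r : ℤ) j with h' | h'
  · rw [zchoose_of_lt h', zchoose_of_neg (by omega)]
  lift j to ℕ using h
  rw [show (r : ℤ) - j = ((r - j : ℕ) : ℤ) by omega, zchoose_natCast, zchoose_natCast,
    Nat.choose_symm (by omega)]

lemma zchoose_succ (r : ℕ) (j : ℤ) : zchoose (r + 1) j = zchoose r j + zchoose r (j - 1) := by
  rcases lt_trichotomy j 0 with h | rfl | h
  · simp only [zchoose_of_neg h, zchoose_of_neg (show j - 1 < 0 by omega), add_zero]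
  · simp [zchoose]
  · obtain ⟨k, rfl⟩ : ∃ k : ℕ, j = k + 1 := ⟨(j - 1).toNat, by omega⟩
    rw [add_sub_cancel_right, ← Nat.cast_succ, zchoose_natCast, zchoose_natCast, zchoose_natCast,
      Nat.choose_succ_succ', Nat.cast_add, add_comm]

lemma zchoose_zero_left (j : ℤ) : zchoose 0 j = if j = 0 then 1 else 0 := by
  rcases lt_trichotomy j 0 with h | rfl | h
  · rw [zchoose_of_neg h, if_neg h.ne]
  · simp [zchoose]
  · rw [zchoose_of_lt (by exact_mod_cast h), if_neg h.ne']

lemma finite_support_zchoose_add_mul (r : ℕ) (c : ℤ) {N : ℤ} (hN : N ≠ 0) :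
    (Function.support fun k : ℤ => zchoose r (c + k * N)).Finite :=
  ((Set.finite_Icc 0 (r : ℤ)).subset (support_zchoose_subset r)).preimage
    ((add_right_injective c).comp (mul_left_injective₀ hN)).injOn

end zchoose

lemma finsum_comp_equiv_sub_self {α M : Type*} [AddCommGroup M] {f : α → M}
    (hf : f.support.Finite) (e : α ≃ α) : ∑ᶠ a, (f (e a) - f a) = 0 := by
  rw [finsum_sub_distrib (hf.preimage e.injective.injOn) hf, finsum_comp_equiv e, sub_self]

lemma add_mul_ne_zero_of_abs_lt {c k N : ℤ} (hc : |c| < N) (hk : k ≠ 0) : c + k * N ≠ 0 := by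
  intro h
  obtain rfl : c = 0 := Int.eq_zero_of_abs_lt_dvd ⟨-k, by linarith⟩ hc
  have hN : N ≠ 0 := (abs_nonneg 0 |>.trans_lt hc).ne'
  exact hk (by simpa [hN] using h)

section reflectionSum

variable (m s : ℕ)

noncomputable def reflectionSum (L : ℕ) (t : ℤ) : ℤ :=
  ∑ᶠ k : ℤ, (zchoose L (t + k * (m + s + 2)) - zchoose L (t + s + 1 + k * (m + s + 2)))

lemma finite_support_reflectionSum_term (L : ℕ) (t : ℤ) :
    (Function.support fun k : ℤ =>
      zchoose L (t + k * (m + s + 2)) - zchoose L (t + s + 1 + k * (m + s + 2))).Finite :=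
  ((finite_support_zchoose_add_mul L t (by positivity)).union
    (finite_support_zchoose_add_mul L (t + s + 1) (by positivity))).subset
    (Function.support_sub _ _)

lemma reflectionSum_succ (L : ℕ) (t : ℤ) :
    reflectionSum m s (L + 1) t = reflectionSum m s L t + reflectionSum m s L (t - 1) := by
  rw [reflectionSum, reflectionSum, reflectionSum, ← finsum_add_distrib
    (finite_support_reflectionSum_term m s L t) (finite_support_reflectionSum_term m s L (t - 1))]
  refine finsum_congr fun k => ?_
  rw [zchoose_succ, zchoose_succ]
  ring_nf

lemma reflectionSum_eq_zero_of_equiv {L : ℕ} {t : ℤ} (e : ℤ ≃ ℤ)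
    (he : ∀ k, zchoose L (t + k * (m + s + 2)) = zchoose L (t + s + 1 + e k * (m + s + 2))) :
    reflectionSum m s L t = 0 := by
  simp only [reflectionSum, he]
  exact finsum_comp_equiv_sub_self (finite_support_zchoose_add_mul L _ (by positivity)) e

lemma reflectionSum_eq_zero_of_eq_top {L : ℕ} {t : ℤ} (h : 2 * t - L = m + 1) :
    reflectionSum m s L t = 0 :=
  reflectionSum_eq_zero_of_equiv m s (Equiv.subLeft (-1)) fun k => by
    rw [← zchoose_sub_left, Equiv.subLeft_apply]
    congr 1
    linear_combination -h

lemma reflectionSum_eq_zero_of_eq_bot {L : ℕ} {t : ℤ} (h : 2 * t - L = -s - 1) :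
    reflectionSum m s L t = 0 :=
  reflectionSum_eq_zero_of_equiv m s (Equiv.neg ℤ) fun k => by
    rw [← zchoose_sub_left, Equiv.neg_apply]
    congr 1
    linear_combination -h

lemma reflectionSum_zero {t : ℤ} (hbot : -(s : ℤ) - 1 ≤ 2 * t) (htop : 2 * t ≤ m + 1) :
    reflectionSum m s 0 t = if t = 0 then 1 else 0 := by
  rw [reflectionSum, finsum_eq_single _ 0 fun k hk => ?_]
  · rw [zero_mul, add_zero, add_zero, zchoose_zero_left, zchoose_zero_left,
      if_neg (by omega : t + s + 1 ≠ 0), sub_zero]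
  · rw [zchoose_zero_left, zchoose_zero_left,
      if_neg (add_mul_ne_zero_of_abs_lt (abs_lt.mpr ⟨by omega, by omega⟩) hk),
      if_neg (add_mul_ne_zero_of_abs_lt (abs_lt.mpr ⟨by omega, by omega⟩) hk), sub_zero]

end reflectionSum

section paths

def excess (l : List Bool) : ℤ := l.count true - l.count false

lemma excess_eq_two_mul_count_true_sub_length (l : List Bool) :
    excess l = 2 * l.count true - l.length := by
  rw [excess, ← List.count_true_add_count_false l]
  push_cast
  ring

def PrefixesWithin (lo hi : ℤ) (l : List Bool) : Prop :=
  ∀ p : List Bool, p <+: l → lo ≤ excess p ∧ excess p ≤ hi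

variable {lo hi : ℤ}

lemma prefixesWithin_nil : PrefixesWithin lo hi [] ↔ lo ≤ 0 ∧ 0 ≤ hi := by
  simp [PrefixesWithin, excess]

lemma prefixesWithin_append_singleton {l : List Bool} {b : Bool} :
    PrefixesWithin lo hi (l ++ [b]) ↔
      (lo ≤ excess (l ++ [b]) ∧ excess (l ++ [b]) ≤ hi) ∧ PrefixesWithin lo hi l := by
  simp only [PrefixesWithin, List.prefix_concat_iff, forall_eq_or_imp]

variable (lo hi) in
/-- The paths with `L` steps, `t` of them North, all of whose nonempty prefixes have excess in
`[lo, hi]`. -/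
def boundedPaths : ℕ → ℤ → Finset (List Bool)
  | 0, t => if t = 0 then {[]} else ∅
  | L + 1, t =>
    if lo ≤ 2 * t - (L + 1) ∧ 2 * t - (L + 1) ≤ hi then
      (boundedPaths L t).image (· ++ [false]) ∪ (boundedPaths L (t - 1)).image (· ++ [true])
    else ∅

lemma append_singleton_mem_image {α : Type*} [DecidableEq α] {A : Finset (List α)} {l : List α}
    {a b : α} : l ++ [b] ∈ A.image (· ++ [a]) ↔ l ∈ A ∧ a = b := by
  simp

lemma mem_boundedPaths (h0 : lo ≤ 0 ∧ 0 ≤ hi) {L : ℕ} {t : ℤ} {l : List Bool} :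
    l ∈ boundedPaths lo hi L t ↔ l.length = L ∧ l.count true = t ∧ PrefixesWithin lo hi l := by
  induction L generalizing t l with
  | zero =>
    rw [boundedPaths]
    rcases l with _ | ⟨b, l⟩ <;> split_ifs <;> simp [prefixesWithin_nil, eq_comm, *]
  | succ L ih =>
    rcases List.eq_nil_or_concat' l with rfl | ⟨l, b, rfl⟩
    · rw [boundedPaths]
      split_ifs <;> simp
    rw [boundedPaths, prefixesWithin_append_singleton, excess_eq_two_mul_count_true_sub_length]
    split_ifs with hstrip
    · rw [Finset.mem_union, append_singleton_mem_image, append_singleton_mem_image, ih, ih]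
      cases b <;> grind
    · grind

lemma card_boundedPaths_succ (L : ℕ) (t : ℤ) :
    (boundedPaths lo hi (L + 1) t).card =
      if lo ≤ 2 * t - (L + 1) ∧ 2 * t - (L + 1) ≤ hi then
        (boundedPaths lo hi L t).card + (boundedPaths lo hi L (t - 1)).card
      else 0 := by
  rw [boundedPaths]
  split_ifs
  · rw [Finset.card_union_of_disjoint, Finset.card_image_of_injective _
      (List.append_left_injective _), Finset.card_image_of_injective _
      (List.append_left_injective _)]
    simp [Finset.disjoint_left]
  · rfl

end paths

lemma card_boundedPaths_eq_reflectionSum (m s L : ℕ) {t : ℤ} (hbot : -(s : ℤ) - 1 ≤ 2 * t - L)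
    (htop : 2 * t - L ≤ m + 1) : ((boundedPaths (-s) m L t).card : ℤ) = reflectionSum m s L t := by
  induction L generalizing t with
  | zero =>
    rw [reflectionSum_zero m s (by omega) (by omega), boundedPaths]
    split_ifs <;> rfl
  | succ L ih =>
    rw [card_boundedPaths_succ]
    push_cast at hbot htop ⊢
    split_ifs with hstrip
    · rw [ih (by omega) (by omega), ih (by omega) (by omega), reflectionSum_succ]
    · rcases not_and_or.mp hstrip with hlo | hhi
      · rw [reflectionSum_eq_zero_of_eq_bot m s (by push_cast; omega)]
      · rw [reflectionSum_eq_zero_of_eq_top m s (by push_cast; omega)]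

theorem card_doubly_bounded_paths_general (n m s : ℕ) :
    (Nat.card {l : List Bool //
        l.length = 2 * n ∧ l.count true = n ∧
        ∀ p : List Bool, p <+: l →
          -(s : ℤ) ≤ (p.count true : ℤ) - p.count false ∧
            (p.count true : ℤ) - p.count false ≤ m} : ℤ) =
      ∑ᶠ k : ℤ, (zchoose (2 * n) (n + k * (m + s + 2)) -
        zchoose (2 * n) (n + s + 1 + k * (m + s + 2))) := by
  have hpaths : Nat.card {l : List Bool // l.length = 2 * n ∧ l.count true = n ∧
      PrefixesWithin (-s) m l} = (boundedPaths (-s) m (2 * n) n).card := by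
    rw [← Nat.card_eq_finsetCard]
    exact Nat.card_congr <| Equiv.subtypeEquivRight fun l => by
      rw [mem_boundedPaths (by omega), Nat.cast_inj]
  exact (congrArg Nat.cast hpaths).trans <|
    card_boundedPaths_eq_reflectionSum m s (2 * n) (by push_cast; omega) (by push_cast; omega)

/-- The number of lattice paths from (0,0) to (n,n) (encoded as lists of booleans,
`true` = North, `false` = East) whose prefix excess of North over East steps always
lies in `[−s, m]` equals, with `N = m + s + 2`, the alternating sum
`∑_{k∈ℤ} [C(2n, n + kN) − C(2n, n + s + 1 + kN)]`. -/
theorem card_doubly_bounded_paths (n m s : ℕ) (hms : 1 ≤ m + s) :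
    (Nat.card {l : List Bool //
        l.length = 2 * n ∧ l.count true = n ∧
        ∀ p : List Bool, p <+: l →
          -(s : ℤ) ≤ (p.count true : ℤ) - p.count false ∧
            (p.count true : ℤ) - p.count false ≤ m} : ℤ) =
      ∑ᶠ k : ℤ, (zchoose (2 * n) (n + k * (m + s + 2)) -
        zchoose (2 * n) (n + s + 1 + k * (m + s + 2))) :=
  card_doubly_bounded_paths_general n m s
end

section
/- For every natural number n, the centered period-4 alternating window sum of row n of the 3-Pascal triangle with offset 2 equals 1: Σ_{j∈ℤ} [ T(n, 4j) − T(n, 4j + 2) ] = 1. -/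
open Polynomial in
/-- Trinomial coefficient `T(n, k)`: the coefficient of `x^(n+k)` in `(1 + x + x²)^n`
over `ℤ` (the entries of the 3-Pascal triangle), with `T(n, k) = 0` for `|k| > n`. -/
noncomputable def trinom (n : ℕ) (k : ℤ) : ℤ :=
  if 0 ≤ (n : ℤ) + k then ((1 + X + X ^ 2 : Polynomial ℤ) ^ n).coeff ((n : ℤ) + k).toNat
  else 0

/-!
Since `1 + i + i² = i`, the weights `Re(i^k)` (that is `1, 0, -1, 0` periodically) are fixed by the
3-Pascal step `f ↦ f(k-1) + f(k) + f(k+1)`, so the window sum is the same in every row of the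
triangle, and in row `0` it is `1`. Concretely, one step adds `∑ⱼ (f(4j-1) - f(4j+3))`, which
vanishes because the two sums differ only by the shift `j ↦ j + 1`.
-/

open Polynomial

namespace Polynomial

variable {R : Type*} [Semiring R]

noncomputable def intCoeff (p : R[X]) (i : ℤ) : R :=
  if 0 ≤ i then p.coeff i.toNat else 0

theorem intCoeff_add (p q : R[X]) (i : ℤ) :
    (p + q).intCoeff i = p.intCoeff i + q.intCoeff i := by
  unfold intCoeff
  split_ifs <;> simp

theorem intCoeff_mul_X_pow (p : R[X]) (k : ℕ) (i : ℤ) :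
    (p * X ^ k).intCoeff i = p.intCoeff (i - k) := by
  unfold intCoeff
  rw [coeff_mul_X_pow']
  split_ifs <;> first | omega | rfl | congr 1; omega

theorem intCoeff_mul_X (p : R[X]) (i : ℤ) : (p * X).intCoeff i = p.intCoeff (i - 1) := by
  simpa using intCoeff_mul_X_pow p 1 i

theorem intCoeff_mul_one_add_X_add_X_sq (p : R[X]) (i : ℤ) :
    (p * (1 + X + X ^ 2)).intCoeff i = p.intCoeff (i - 2) + p.intCoeff (i - 1) + p.intCoeff i := by
  rw [mul_add, mul_add, mul_one, intCoeff_add, intCoeff_add, intCoeff_mul_X,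
    intCoeff_mul_X_pow, Nat.cast_ofNat]
  ac_rfl

theorem finite_support_intCoeff (p : R[X]) : (Function.support p.intCoeff).Finite := by
  refine (p.support.finite_toSet.image ((↑) : ℕ → ℤ)).subset fun i hi => ?_
  rw [Function.mem_support, intCoeff] at hi
  split_ifs at hi with h
  · exact ⟨i.toNat, mem_support_iff.mpr hi, Int.toNat_of_nonneg h⟩
  · exact absurd rfl hi

end Polynomial

theorem trinom_eq_intCoeff (n : ℕ) (k : ℤ) :
    trinom n k = ((1 + X + X ^ 2 : ℤ[X]) ^ n).intCoeff (n + k) := rfl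

theorem finite_support_trinom (n : ℕ) : (Function.support (trinom n)).Finite :=
  (finite_support_intCoeff _).preimage (add_right_injective _).injOn

theorem trinom_zero (k : ℤ) : trinom 0 k = if k = 0 then 1 else 0 := by
  rw [trinom_eq_intCoeff]
  unfold intCoeff
  split_ifs <;> simp_all [coeff_one]
  omega

def trinomialStep {M : Type*} [Add M] (f : ℤ → M) (k : ℤ) : M :=
  f (k - 1) + f k + f (k + 1)

theorem trinom_succ (n : ℕ) : trinom (n + 1) = trinomialStep (trinom n) := by
  funext k
  simp only [trinom_eq_intCoeff, trinomialStep]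
  rw [pow_succ, intCoeff_mul_one_add_X_add_X_sq]
  congr 2 <;> push_cast <;> ring_nf

section WindowSum

variable {M : Type*} [AddCommGroup M]

noncomputable def periodFourAltSum (f : ℤ → M) : M :=
  ∑ᶠ j : ℤ, (f (4 * j) - f (4 * j + 2))

theorem finite_support_comp_mul_add {f : ℤ → M} (hf : (Function.support f).Finite)
    {d : ℤ} (hd : d ≠ 0) (a : ℤ) : (Function.support fun j => f (d * j + a)).Finite :=
  hf.preimage fun _ _ _ _ h => mul_right_injective₀ hd (add_right_cancel h)

theorem finsum_comp_mul_add_add_self (f : ℤ → M) (d a : ℤ) :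
    ∑ᶠ j : ℤ, f (d * j + (a + d)) = ∑ᶠ j : ℤ, f (d * j + a) := by
  rw [← finsum_comp_equiv (Equiv.addRight (1 : ℤ)) (f := fun j => f (d * j + a))]
  exact finsum_congr fun j => by
    rw [Equiv.coe_addRight]; ring_nf

theorem periodFourAltSum_trinomialStep {f : ℤ → M} (hf : (Function.support f).Finite) :
    periodFourAltSum (trinomialStep f) = periodFourAltSum f := by
  have hfin := finite_support_comp_mul_add hf (by norm_num : (4 : ℤ) ≠ 0)
  have hfin0 : (Function.support fun j => f (4 * j)).Finite := by simpa using hfin 0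
  have hsplit : ∀ j : ℤ, trinomialStep f (4 * j) - trinomialStep f (4 * j + 2) =
      (f (4 * j) - f (4 * j + 2)) + (f (4 * j + -1) - f (4 * j + (-1 + 4))) := by
    intro j
    simp only [trinomialStep]
    ring_nf
    abel
  have htelescope : ∑ᶠ j : ℤ, (f (4 * j + -1) - f (4 * j + (-1 + 4))) = 0 := by
    rw [finsum_sub_distrib (hfin _) (hfin _), finsum_comp_mul_add_add_self, sub_self]
  rw [periodFourAltSum, finsum_congr hsplit, finsum_add_distrib, htelescope, add_zero,
    periodFourAltSum]
  · exact (hfin0.union (hfin 2)).subset (Function.support_sub _ _)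
  · exact ((hfin _).union (hfin _)).subset (Function.support_sub _ _)

end WindowSum

theorem periodFourAltSum_trinom_zero : periodFourAltSum (trinom 0) = 1 := by
  rw [periodFourAltSum, finsum_eq_single _ 0]
  · simp [trinom_zero]
  · intro j hj
    simp only [trinom_zero]
    split_ifs <;> omega

/-- The centered period-4 alternating window sum of row n of the 3-Pascal triangle
with offset 2 equals 1. -/
theorem trinomial_period_four_window_sum (n : ℕ) :
    ∑ᶠ j : ℤ, (trinom n (4 * j) - trinom n (4 * j + 2)) = 1 := by
  show periodFourAltSum (trinom n) = 1
  induction n with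
  | zero => exact periodFourAltSum_trinom_zero
  | succ n ih => rw [trinom_succ, periodFourAltSum_trinomialStep (finite_support_trinom n), ih]
end

section
/- For every natural number n, the centered period-5 alternating window sum of row n of the 3-Pascal triangle with offset 2 equals the Fibonacci number of index n+1: Σ_{j∈ℤ} [ T(n, 5j) − T(n, 5j + 2) ] = Fib(n+1). -/
/-!
Row `n` of the 3-Pascal triangle is the coefficient list of the Laurent polynomial
`(T⁻¹ + 1 + T)^n`. Let `S_n(r)` be the sum of its coefficients in the residue class of
`r` mod 5. Multiplying by `T⁻¹ + 1 + T` gives `S_{n+1}(r) = S_n(r+1) + S_n(r) + S_n(r-1)`, and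
the symmetry `T ↦ T⁻¹` gives `S_n(-r) = S_n(r)`, so `S_n(3) = S_n(2)` and `S_n(4) = S_n(1)`.
Hence `U_n = S_n(0) - S_n(2)` and `V_n = S_n(1) - S_n(2)` satisfy `U_{n+1} = U_n + V_n`,
`V_{n+1} = U_n`, with `U_0 = 1`, `V_0 = 0`: they are `Fib(n+1)` and `Fib n`.
-/

open Polynomial LaurentPolynomial

theorem Polynomial.coeff_toLaurent_apply {R : Type*} [Semiring R] (p : R[X]) (k : ℤ) :
    (toLaurent p).coeff k = if 0 ≤ k then p.coeff k.toNat else 0 := by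
  split_ifs with hk
  · lift k to ℕ using hk
    exact Finsupp.mapDomain_apply Nat.cast_injective _ k
  · exact Finsupp.mapDomain_of_notMem_range _ _ (by rintro ⟨m, rfl⟩; simp at hk)

namespace LaurentPolynomial

section Semiring

variable {R : Type*} [Semiring R]

theorem coeff_mul_T (f : R[T;T⁻¹]) (a k : ℤ) : (f * T a).coeff k = f.coeff (k - a) := by
  rw [T, AddMonoidAlgebra.coeff_mul_single_apply, mul_one, sub_eq_add_neg]

noncomputable def residueSum (m r : ℤ) (f : R[T;T⁻¹]) : R := ∑ᶠ j : ℤ, f.coeff (m * j + r)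

theorem hasFiniteSupport_coeff_mul_add {m : ℤ} (hm : m ≠ 0) (r : ℤ) (f : R[T;T⁻¹]) :
    (fun j : ℤ => f.coeff (m * j + r)).HasFiniteSupport :=
  f.coeff.hasFiniteSupport.fun_comp_of_injective
    ((add_left_injective r).comp (mul_right_injective₀ hm))

theorem residueSum_add {m : ℤ} (hm : m ≠ 0) (r : ℤ) (f g : R[T;T⁻¹]) :
    residueSum m r (f + g) = residueSum m r f + residueSum m r g := by
  simp only [residueSum, AddMonoidAlgebra.coeff_add, Finsupp.add_apply]
  exact finsum_add_distrib (hasFiniteSupport_coeff_mul_add hm r f)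
    (hasFiniteSupport_coeff_mul_add hm r g)

theorem residueSum_mul_T (m r a : ℤ) (f : R[T;T⁻¹]) :
    residueSum m r (f * T a) = residueSum m (r - a) f := by
  simp only [residueSum, coeff_mul_T, add_sub_assoc]

theorem residueSum_add_self (m r : ℤ) (f : R[T;T⁻¹]) :
    residueSum m (r + m) f = residueSum m r f := by
  rw [residueSum, ← finsum_comp_equiv (Equiv.subRight 1)]
  congr 1; ext j
  simp only [Equiv.subRight_apply]; ring_nf

theorem residueSum_one {m : ℤ} (hm : m ≠ 0) (r : ℤ) :
    residueSum m r (1 : R[T;T⁻¹]) = if m ∣ r then 1 else 0 := by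
  rw [residueSum, ← T_zero]
  simp only [T_apply]
  split_ifs with h
  · obtain ⟨c, rfl⟩ := h
    rw [finsum_eq_single _ (-c) fun j hj => if_neg fun h => hj ?_]
    · simp
    · have : m * (j + c) = 0 := by linarith
      simpa [hm, add_eq_zero_iff_eq_neg] using this
  · exact finsum_eq_zero_of_forall_eq_zero fun j => if_neg fun h0 => h ⟨-j, by linarith⟩

end Semiring

theorem residueSum_invert {R : Type*} [CommSemiring R] (m r : ℤ) (f : R[T;T⁻¹]) :
    residueSum m (-r) (invert f) = residueSum m r f := by
  rw [residueSum, ← finsum_comp_equiv (Equiv.neg ℤ)]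
  congr 1; ext j
  simp only [Equiv.neg_apply, invert_apply]; ring_nf

end LaurentPolynomial

noncomputable abbrev trinomialLaurent : ℤ[T;T⁻¹] := T (-1) + 1 + T 1

theorem toLaurent_one_add_X_add_X_sq :
    toLaurent (1 + X + X ^ 2 : ℤ[X]) = trinomialLaurent * T 1 := by
  simp only [map_add, map_one, toLaurent_X, toLaurent_X_pow, add_mul, one_mul, ← T_add]
  norm_num [T_zero]

theorem trinom_eq_coeff_trinomialLaurent_pow (n : ℕ) (k : ℤ) :
    trinom n k = (trinomialLaurent ^ n).coeff k := by
  have h : trinomialLaurent ^ n = toLaurent ((1 + X + X ^ 2 : ℤ[X]) ^ n) * T (-n) := by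
    rw [map_pow, toLaurent_one_add_X_add_X_sq, mul_pow, T_pow, mul_assoc, ← T_add]
    simp [T_zero]
  rw [h, coeff_mul_T, coeff_toLaurent_apply, trinom, sub_neg_eq_add, add_comm]

theorem invert_trinomialLaurent : invert trinomialLaurent = trinomialLaurent := by
  simp only [map_add, map_one, invert_T, neg_neg]; ring

theorem residueSum_trinomialLaurent_pow_succ {m : ℤ} (hm : m ≠ 0) (r : ℤ) (n : ℕ) :
    residueSum m r (trinomialLaurent ^ (n + 1)) =
      residueSum m (r + 1) (trinomialLaurent ^ n) + residueSum m r (trinomialLaurent ^ n) +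
        residueSum m (r - 1) (trinomialLaurent ^ n) := by
  rw [pow_succ, mul_add, mul_add, mul_one, residueSum_add hm, residueSum_add hm,
    residueSum_mul_T, residueSum_mul_T, sub_neg_eq_add]

theorem residueSum_trinomialLaurent_pow_neg (m r : ℤ) (n : ℕ) :
    residueSum m (-r) (trinomialLaurent ^ n) = residueSum m r (trinomialLaurent ^ n) := by
  rw [← residueSum_invert m r, map_pow, invert_trinomialLaurent]

theorem residueSum_five_trinomialLaurent_pow (n : ℕ) :
    residueSum 5 0 (trinomialLaurent ^ n) - residueSum 5 2 (trinomialLaurent ^ n) =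
        Nat.fib (n + 1) ∧
      residueSum 5 1 (trinomialLaurent ^ n) - residueSum 5 2 (trinomialLaurent ^ n) =
        Nat.fib n := by
  induction n with
  | zero => norm_num [residueSum_one]
  | succ n ih =>
    obtain ⟨hU, hV⟩ := ih
    have h3 : residueSum 5 3 (trinomialLaurent ^ n) = residueSum 5 2 (trinomialLaurent ^ n) := by
      rw [← residueSum_trinomialLaurent_pow_neg, ← residueSum_add_self]; norm_num
    have h4 := residueSum_trinomialLaurent_pow_neg 5 1 n
    simp only [residueSum_trinomialLaurent_pow_succ (by norm_num : (5 : ℤ) ≠ 0),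
      Nat.fib_add_two, Nat.cast_add]
    norm_num only
    constructor <;> linarith

/-- The centered period-5 alternating window sum of row n of the 3-Pascal triangle
with offset 2 equals the Fibonacci number Fib(n+1). -/
theorem trinomial_period_five_window_sum_offset_two (n : ℕ) :
    ∑ᶠ j : ℤ, (trinom n (5 * j) - trinom n (5 * j + 2)) = (Nat.fib (n + 1) : ℤ) := by
  have h5 : (5 : ℤ) ≠ 0 := by norm_num
  rw [← (residueSum_five_trinomialLaurent_pow n).1, residueSum, residueSum,
    ← finsum_sub_distrib (hasFiniteSupport_coeff_mul_add h5 0 _)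
      (hasFiniteSupport_coeff_mul_add h5 2 _)]
  simp only [trinom_eq_coeff_trinomialLaurent_pow, add_zero]
end

section
/- For every natural number n, the modified q-Euler characteristic for N = 3 with pentagonal-number exponents equals 1; explicitly, as polynomials in ℤ[q]: Σ_{i∈ℤ} (−1)^i · q^{(3i² − i)/2} · [2n choose c(i)]_q = 1, where the column function is c(2j) = n + 3j and c(2j + 1) = n + 1 + 3j for j ∈ ℤ. -/
/-!
Replace `2n` by an arbitrary `M` and the column `c(i)` by `⌊(M + 3i)/2⌋` (the two agree when
`M = 2n`), and call the resulting sum `E(M)`. Only `i = 0` contributes to `E(0) = 1`, so it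
suffices that `E(M + 1) = E(M)`. In passing from `M` to `M + 1` the column of the `i`-th term goes
up by one when `M + 1 + i` is even and stays put otherwise; expanding `[M + 1, c]` by the matching
q-Pascal rule leaves one correction term per index, and since the pentagonal numbers satisfy
`p(i + 1) = p(i) + 3i + 1`, the corrections of `i` and `i + 1` cancel whenever `M + 1 + i` is
even, so `E(M + 1) - E(M)` telescopes to `0`.

Both q-Pascal rules come from the subset-sum description after clearing the factor `q^(k(k-1)/2)`:
split the `k`-subsets of `{0, …, n}` according to whether they contain `n`, resp. `0`.
-/

open Polynomial

/-- The Gaussian binomial coefficient `[n choose k]_q` as a polynomial in `ℤ[q]`: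
the sum over `k`-element subsets `S` of `{0, 1, …, n−1}` of
`q^((Σ_{s∈S} s) − k(k−1)/2)`. -/
noncomputable def gaussBinom (n k : ℕ) : Polynomial ℤ :=
  ∑ S ∈ (Finset.range n).powersetCard k, X ^ ((∑ s ∈ S, s) - k * (k - 1) / 2)

/-- The Gaussian binomial coefficient with an integer lower index, equal to `0`
when `j < 0` or `j > n`. -/
noncomputable def gaussBinomZ (n : ℕ) (j : ℤ) : Polynomial ℤ :=
  if 0 ≤ j then gaussBinom n j.toNat else 0

/-- The column function `c`: `c(2j) = n + r·j` and `c(2j + 1) = n + off + r·j`. -/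
def colFun (n : ℕ) (r off : ℤ) (i : ℤ) : ℤ :=
  if Even i then (n : ℤ) + r * (i / 2) else (n : ℤ) + off + r * ((i - 1) / 2)

open Finset

theorem Finset.sum_powersetCard_succ_insert {α M : Type*} [DecidableEq α] [AddCommMonoid M]
    {x : α} {s : Finset α} (hx : x ∉ s) (k : ℕ) (f : Finset α → M) :
    ∑ S ∈ powersetCard (k + 1) (insert x s), f S =
      ∑ S ∈ powersetCard (k + 1) s, f S + ∑ T ∈ powersetCard k s, f (insert x T) := by
  have hxT : ∀ j, ∀ T ∈ powersetCard j s, x ∉ T := fun _ T hT h =>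
    hx ((mem_powersetCard.1 hT).1 h)
  rw [powersetCard_succ_insert hx, sum_union, sum_image]
  · intro T hT U hU hTU
    rw [← erase_insert (hxT k T hT), hTU, erase_insert (hxT k U hU)]
  · simp only [disjoint_left, mem_image, not_exists, not_and]
    intro S hS T _ hTS
    exact hxT _ S hS (hTS ▸ mem_insert_self x T)

theorem Finset.sum_range_card_le_sum (S : Finset ℕ) :
    ∑ i ∈ range #S, i ≤ ∑ s ∈ S, s := by
  have h := sum_range_le_sum (s := S.map Nat.castEmbedding) (c := 0) (by simp)
  simp only [zero_add, card_map, sum_map, Nat.castEmbedding_apply] at h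
  rw [← Nat.cast_sum, ← Nat.cast_sum] at h
  exact_mod_cast h

noncomputable def subsetSumPoly (n k : ℕ) : ℤ[X] :=
  ∑ S ∈ (range n).powersetCard k, X ^ (∑ s ∈ S, s)

theorem X_pow_mul_gaussBinom (n k : ℕ) :
    X ^ (k * (k - 1) / 2) * gaussBinom n k = subsetSumPoly n k := by
  rw [gaussBinom, subsetSumPoly, mul_sum]
  refine sum_congr rfl fun S hS => ?_
  have hle := sum_range_card_le_sum S
  rw [(mem_powersetCard.1 hS).2, sum_range_id] at hle
  rw [← pow_add, Nat.add_sub_cancel' hle]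

theorem subsetSumPoly_succ_succ (n k : ℕ) :
    subsetSumPoly (n + 1) (k + 1) = subsetSumPoly n (k + 1) + X ^ n * subsetSumPoly n k := by
  rw [subsetSumPoly, range_add_one, sum_powersetCard_succ_insert notMem_range_self, subsetSumPoly,
    subsetSumPoly, mul_sum]
  congr 1
  refine sum_congr rfl fun T hT => ?_
  rw [sum_insert fun h => notMem_range_self ((mem_powersetCard.1 hT).1 h), pow_add]

theorem subsetSumPoly_succ_succ' (n k : ℕ) :
    subsetSumPoly (n + 1) (k + 1) =
      X ^ (k + 1) * subsetSumPoly n (k + 1) + X ^ k * subsetSumPoly n k := by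
  have hrange : range (n + 1) = insert 0 ((range n).map (addRightEmbedding 1)) := range_add_one' n
  rw [subsetSumPoly, hrange, sum_powersetCard_succ_insert (by simp), subsetSumPoly,
    subsetSumPoly, mul_sum, mul_sum, powersetCard_map, powersetCard_map, sum_map, sum_map]
  congr 1 <;> refine sum_congr rfl fun T hT => ?_ <;>
    simp [sum_add_distrib, (mem_powersetCard.1 hT).2, ← pow_add, add_comm]

theorem gaussBinom_zero_right (n : ℕ) : gaussBinom n 0 = 1 := by
  simp [gaussBinom]

theorem gaussBinom_eq_zero_of_lt {n k : ℕ} (h : n < k) : gaussBinom n k = 0 := by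
  rw [gaussBinom, powersetCard_eq_empty.2 (by simpa using h), sum_empty]

theorem gaussBinom_succ_succ (n k : ℕ) :
    gaussBinom (n + 1) (k + 1) = gaussBinom n (k + 1) + X ^ (n - k) * gaussBinom n k := by
  rcases lt_or_ge n k with hnk | hkn
  · rw [gaussBinom_eq_zero_of_lt hnk, gaussBinom_eq_zero_of_lt (by omega),
      gaussBinom_eq_zero_of_lt (by omega), mul_zero, add_zero]
  obtain ⟨d, rfl⟩ := Nat.exists_eq_add_of_le hkn
  refine mul_left_cancel₀ (pow_ne_zero ((k + 1) * (k + 1 - 1) / 2) X_ne_zero) ?_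
  rw [X_pow_mul_gaussBinom, subsetSumPoly_succ_succ, ← X_pow_mul_gaussBinom,
    ← X_pow_mul_gaussBinom, Nat.triangle_succ, Nat.add_sub_cancel_left]
  ring

theorem gaussBinom_succ_succ' (n k : ℕ) :
    gaussBinom (n + 1) (k + 1) = X ^ (k + 1) * gaussBinom n (k + 1) + gaussBinom n k := by
  refine mul_left_cancel₀ (pow_ne_zero ((k + 1) * (k + 1 - 1) / 2) X_ne_zero) ?_
  rw [X_pow_mul_gaussBinom, subsetSumPoly_succ_succ', ← X_pow_mul_gaussBinom,
    ← X_pow_mul_gaussBinom, Nat.triangle_succ]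
  ring

theorem gaussBinomZ_of_neg {n : ℕ} {j : ℤ} (h : j < 0) : gaussBinomZ n j = 0 :=
  if_neg h.not_ge

theorem gaussBinomZ_natCast (n k : ℕ) : gaussBinomZ n k = gaussBinom n k := by
  simp [gaussBinomZ]

theorem gaussBinomZ_of_lt {n : ℕ} {j : ℤ} (h : (n : ℤ) < j) : gaussBinomZ n j = 0 := by
  lift j to ℕ using by omega
  rw [gaussBinomZ_natCast, gaussBinom_eq_zero_of_lt (by omega)]

theorem gaussBinomZ_zero_right (n : ℕ) : gaussBinomZ n 0 = 1 := by
  simpa [gaussBinom_zero_right] using gaussBinomZ_natCast n 0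

theorem mem_Icc_of_gaussBinomZ_ne_zero {n : ℕ} {j : ℤ} (h : gaussBinomZ n j ≠ 0) :
    j ∈ Set.Icc 0 (n : ℤ) := by
  by_contra hj
  rcases not_and_or.1 hj with hj | hj
  · exact h (gaussBinomZ_of_neg (not_le.1 hj))
  · exact h (gaussBinomZ_of_lt (not_le.1 hj))

theorem gaussBinomZ_succ (n : ℕ) (j : ℤ) :
    gaussBinomZ (n + 1) j =
      gaussBinomZ n j + X ^ ((n : ℤ) + 1 - j).toNat * gaussBinomZ n (j - 1) := by
  rcases j with (_ | k) | k
  · simp [gaussBinomZ_zero_right, gaussBinomZ_of_neg]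
  · rw [Int.ofNat_eq_natCast, Nat.cast_succ, add_sub_cancel_right, ← Nat.cast_succ,
      gaussBinomZ_natCast, gaussBinomZ_natCast, gaussBinomZ_natCast, gaussBinom_succ_succ]
    congr
    omega
  · simp [gaussBinomZ_of_neg, Int.negSucc_lt_zero]

theorem gaussBinomZ_succ' (n : ℕ) (j : ℤ) :
    gaussBinomZ (n + 1) j = X ^ j.toNat * gaussBinomZ n j + gaussBinomZ n (j - 1) := by
  rcases j with (_ | k) | k
  · simp [gaussBinomZ_zero_right, gaussBinomZ_of_neg]
  · rw [Int.ofNat_eq_natCast, Nat.cast_succ, add_sub_cancel_right, ← Nat.cast_succ,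
      gaussBinomZ_natCast, gaussBinomZ_natCast, gaussBinomZ_natCast, gaussBinom_succ_succ',
      Int.toNat_natCast]
  · simp [gaussBinomZ_of_neg, Int.negSucc_lt_zero]

theorem X_pow_mul_gaussBinomZ_congr {n : ℕ} {j : ℤ} {a b : ℕ}
    (h : 0 ≤ j → j ≤ n → a = b) :
    X ^ a * gaussBinomZ n j = X ^ b * gaussBinomZ n j := by
  by_cases hj : gaussBinomZ n j = 0
  · rw [hj, mul_zero, mul_zero]
  · obtain ⟨h0, hn⟩ := mem_Icc_of_gaussBinomZ_ne_zero hj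
    rw [h h0 hn]

theorem Function.HasFiniteSupport.finsum_sub_comp_sub_one {G : Type*} [AddCommGroup G]
    {f : ℤ → G} (hf : f.HasFiniteSupport) : ∑ᶠ i, (f i - f (i - 1)) = 0 := by
  rw [finsum_sub_distrib hf (hf.fun_comp_of_injective (sub_left_injective (b := 1))),
    sub_eq_zero]
  exact (finsum_comp_equiv (Equiv.subRight 1)).symm

theorem natCast_pentagonal_eq_sub_one_add (i : ℤ) :
    (pentagonal i : ℤ) = pentagonal (i - 1) + 3 * i - 2 := by
  linarith [two_mul_natCast_pentagonal i, two_mul_natCast_pentagonal (i - 1)]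

noncomputable def eulerTerm (M : ℕ) (i : ℤ) : ℤ[X] :=
  C (i.negOnePow : ℤ) * X ^ pentagonal i * gaussBinomZ M ((M + 3 * i) / 2)

noncomputable def eulerCorrection (M : ℕ) (i : ℤ) : ℤ[X] :=
  if Even ((M : ℤ) + 1 + i) then
    C (i.negOnePow : ℤ) * X ^ pentagonal i *
      (X ^ (((M : ℤ) + 1 + 3 * i) / 2).toNat * gaussBinomZ M ((M + 1 + 3 * i) / 2))
  else 0

theorem eulerTerm_succ_sub_eulerTerm (M : ℕ) (i : ℤ) :
    eulerTerm (M + 1) i - eulerTerm M i = eulerCorrection M i - eulerCorrection M (i - 1) := by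
  simp only [eulerTerm, eulerCorrection, Nat.cast_succ]
  by_cases h : Even ((M : ℤ) + 1 + i)
  · rw [Int.even_iff] at h
    have h' : ¬ Even ((M : ℤ) + 1 + (i - 1)) := by rw [Int.not_even_iff]; omega
    have hcol : ((M : ℤ) + 3 * i) / 2 = ((M : ℤ) + 1 + 3 * i) / 2 - 1 := by omega
    rw [if_pos (Int.even_iff.2 h), if_neg h', hcol, gaussBinomZ_succ', add_right_comm]
    ring
  · rw [Int.not_even_iff] at h
    have h' : Even ((M : ℤ) + 1 + (i - 1)) := by rw [Int.even_iff]; omega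
    set c := ((M : ℤ) + 3 * i) / 2
    have hcol : ((M : ℤ) + 1 + 3 * i) / 2 = c := by omega
    have hcol' : ((M : ℤ) + 1 + 3 * (i - 1)) / 2 = c - 1 := by omega
    have hsign : (i.negOnePow : ℤ) = -((i - 1).negOnePow : ℤ) := by
      rw [← Units.val_neg, ← Int.negOnePow_succ, sub_add_cancel]
    -- `p(i) + (M + 1 - c) = p(i - 1) + (c - 1)`, as `p(i) = p(i - 1) + 3i - 2` and `2c = M + 3i`
    have hcancel : X ^ pentagonal i * (X ^ ((M : ℤ) + 1 - c).toNat * gaussBinomZ M (c - 1)) =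
        X ^ pentagonal (i - 1) * (X ^ (c - 1).toNat * gaussBinomZ M (c - 1)) := by
      rw [← mul_assoc, ← mul_assoc, ← pow_add, ← pow_add]
      refine X_pow_mul_gaussBinomZ_congr fun h0 hM => ?_
      have := natCast_pentagonal_eq_sub_one_add i
      omega
    rw [if_neg (by rwa [Int.not_even_iff]), if_pos h', hcol, hcol', gaussBinomZ_succ, hsign,
      map_neg]
    linear_combination -C ((i - 1).negOnePow : ℤ) * hcancel

theorem support_eulerTerm_subset (M : ℕ) :
    Function.support (eulerTerm M) ⊆ Set.Icc (-(M : ℤ)) M := by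
  intro i hi
  have := mem_Icc_of_gaussBinomZ_ne_zero (right_ne_zero_of_mul hi)
  simp only [Set.mem_Icc] at this ⊢
  omega

theorem hasFiniteSupport_eulerTerm (M : ℕ) : (eulerTerm M).HasFiniteSupport :=
  (Set.finite_Icc _ _).subset (support_eulerTerm_subset M)

theorem hasFiniteSupport_eulerCorrection (M : ℕ) : (eulerCorrection M).HasFiniteSupport := by
  refine (Set.finite_Icc (-(M : ℤ) - 1) M).subset fun i hi => ?_
  rw [Function.mem_support, eulerCorrection] at hi
  split_ifs at hi
  · have := mem_Icc_of_gaussBinomZ_ne_zero (right_ne_zero_of_mul (right_ne_zero_of_mul hi))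
    simp only [Set.mem_Icc] at this ⊢
    omega
  · exact absurd rfl hi

noncomputable def eulerSum (M : ℕ) : ℤ[X] := ∑ᶠ i, eulerTerm M i

theorem eulerSum_succ (M : ℕ) : eulerSum (M + 1) = eulerSum M := by
  rw [← sub_eq_zero, eulerSum, eulerSum,
    ← finsum_sub_distrib (hasFiniteSupport_eulerTerm _) (hasFiniteSupport_eulerTerm _)]
  simp_rw [eulerTerm_succ_sub_eulerTerm]
  exact (hasFiniteSupport_eulerCorrection M).finsum_sub_comp_sub_one

theorem eulerSum_zero : eulerSum 0 = 1 := by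
  rw [eulerSum, finsum_eq_single _ 0]
  · simp [eulerTerm, gaussBinomZ_zero_right, pentagonal_def]
  · intro i hi
    by_contra h
    have := support_eulerTerm_subset 0 h
    simp only [Set.mem_Icc, CharP.cast_eq_zero, neg_zero] at this
    omega

theorem eulerSum_eq_one (M : ℕ) : eulerSum M = 1 := by
  induction M with
  | zero => exact eulerSum_zero
  | succ M ih => rw [eulerSum_succ, ih]

/-- The modified q-Euler characteristic for N = 3 with pentagonal-number exponents
(3i² − i)/2 equals 1: Σ_{i∈ℤ} (−1)^i · q^((3i² − i)/2) · [2n choose c(i)]_q = 1,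
where c(2j) = n + 3j and c(2j + 1) = n + 1 + 3j. -/
theorem q_euler_char_N_three (n : ℕ) :
    ∑ᶠ i : ℤ, (C ((Int.negOnePow i : ℤˣ) : ℤ) *
      X ^ ((3 * i ^ 2 - i) / 2).toNat * gaussBinomZ (2 * n) (colFun n 3 1 i)) =
      1 := by
  have hcol (i : ℤ) : colFun n 3 1 i = ((2 * n : ℕ) + 3 * i) / 2 := by
    rw [colFun]
    split_ifs with h <;> [rw [Int.even_iff] at h; rw [Int.not_even_iff] at h] <;> omega
  have hpent (i : ℤ) : ((3 * i ^ 2 - i) / 2).toNat = pentagonal i := by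
    rw [pentagonal_def, show 3 * i ^ 2 - i = i * (3 * i - 1) by ring]
  simpa only [eulerSum, eulerTerm, hcol, hpent] using eulerSum_eq_one (2 * n)
end
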